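/- arXiv:2112.01623 — 4 statements merged into one kernel-verified Lean document; each statement's English description precedes it below -/
import Mathlib

section
/- Let θ ∈ ℝ³ with 0 < ‖θ‖ < π, and let α = (2 tan(‖θ‖/2)/‖θ‖) θ be the associated rescaled-Rodrigues vector. Then the matrix exponential of the cross-product matrix of θ equals the rescaled-Rodrigues matrix of α: exp(S(θ)) = I + (4/(4+‖α‖²))(S(α) + (1/2)S(α)²). -/
open Matrix

noncomputable section

/-- Vectors in ℝ³ with the Euclidean norm. -/
abbrev V3 : Type := EuclideanSpace ℝ (Fin 3)

/-- 3×3 real matrices. -/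
abbrev M3 : Type := Matrix (Fin 3) (Fin 3) ℝ

/-- Cross-product (skew-symmetric) matrix of a vector: `S a *ᵥ v = a ×₃ v`. -/
def S (a : V3) : M3 := !![0, -a 2, a 1; a 2, 0, -a 0; -a 1, a 0, 0]

/-- Rescaled-Rodrigues rotation matrix `R(α) = I + (4/(4+‖α‖²))(S(α) + (1/2)S(α)²)`. -/
def Rot (α : V3) : M3 := 1 + (4 / (4 + ‖α‖ ^ 2)) • (S α + (1 / 2 : ℝ) • (S α * S α))

/-- Action of a matrix on a vector. -/
def mulV (A : M3) (v : V3) : V3 := WithLp.toLp 2 (A.mulVec v)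

/-!
Since `S θ ^ 3 = -‖θ‖² • S θ`, the exponential series of `S θ` splits into the sine and cosine
series at `t = ‖θ‖`, giving Rodrigues' formula
`exp (S θ) = 1 + (sin t / t) • S θ + ((1 - cos t) / t²) • S θ ^ 2`.
For `α = (2 tan (t/2) / t) • θ` one has `4 / (4 + ‖α‖²) = 1 / (1 + tan² (t/2)) = cos² (t/2)`,
and the half-angle formulas `sin t = 2 sin (t/2) cos (t/2)`, `1 - cos t = 2 sin² (t/2)` identify
the two coefficients of `Rot α` with those of Rodrigues' formula.
-/

open scoped Nat

section CubicExp

variable {𝔸 : Type*} [Ring 𝔸] [Algebra ℝ 𝔸] {A : 𝔸} {t : ℝ}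

lemma pow_two_mul_add_one_of_pow_three (hA : A ^ 3 = -(t ^ 2) • A) (k : ℕ) :
    A ^ (2 * k + 1) = ((-1) ^ k * t ^ (2 * k)) • A := by
  induction k with
  | zero => simp
  | succ k ih =>
    rw [show 2 * (k + 1) + 1 = 2 * k + 1 + 2 by ring, pow_add, ih, smul_mul_assoc,
      ← pow_succ' A 2, hA, smul_smul]
    congr 1
    ring

lemma pow_two_mul_add_two_of_pow_three (hA : A ^ 3 = -(t ^ 2) • A) (k : ℕ) :
    A ^ (2 * k + 2) = ((-1) ^ k * t ^ (2 * k)) • A ^ 2 := by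
  rw [show 2 * k + 2 = 2 * k + 1 + 1 by ring, pow_succ, pow_two_mul_add_one_of_pow_three hA,
    smul_mul_assoc, ← sq]

lemma exp_eq_of_pow_three [TopologicalSpace 𝔸] [IsTopologicalRing 𝔸] [ContinuousSMul ℝ 𝔸]
    [T2Space 𝔸] (ht : t ≠ 0) (hA : A ^ 3 = -(t ^ 2) • A) :
    NormedSpace.exp A = 1 + (Real.sin t / t) • A + ((1 - Real.cos t) / t ^ 2) • A ^ 2 := by
  have hfact : ∀ n, ((n ! : ℕ) : ℝ) ≠ 0 := fun n => mod_cast n.factorial_ne_zero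
  have hodd : HasSum (fun k => ((2 * k + 1)! : ℝ)⁻¹ • A ^ (2 * k + 1)) ((Real.sin t / t) • A) := by
    convert ((Real.hasSum_sin t).div_const t).smul_const A using 2 with k
    rw [pow_two_mul_add_one_of_pow_three hA, smul_smul, pow_succ]
    congr 1
    field_simp [hfact]
  have hcos_tail := ((hasSum_nat_add_iff' 1).mpr (Real.hasSum_cos t)).neg.div_const (t ^ 2)
  simp only [Finset.range_one, Finset.sum_singleton, pow_zero, mul_zero, one_mul,
    Nat.factorial_zero, Nat.cast_one, div_one, neg_sub] at hcos_tail
  have heven : HasSum (fun k => ((2 * k + 2)! : ℝ)⁻¹ • A ^ (2 * k + 2))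
      (((1 - Real.cos t) / t ^ 2) • A ^ 2) := by
    convert hcos_tail.smul_const (A ^ 2) using 2 with k
    rw [pow_two_mul_add_two_of_pow_three hA, smul_smul, show 2 * (k + 1) = 2 * k + 2 by ring]
    congr 1
    field_simp [hfact]
    ring
  have hexp := (hasSum_nat_add_iff (f := fun n => (n ! : ℝ)⁻¹ • A ^ n) 1).mp
    (hodd.even_add_odd heven)
  simp only [Finset.range_one, Finset.sum_singleton, Nat.factorial_zero, Nat.cast_one, inv_one,
    pow_zero, one_smul] at hexp
  rw [NormedSpace.exp_eq_tsum ℝ]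
  exact hexp.tsum_eq.trans (by abel)

end CubicExp

lemma S_smul (c : ℝ) (a : V3) : S (c • a) = c • S a := by
  ext i j
  fin_cases i <;> fin_cases j <;> simp [S]

lemma S_pow_three (a : V3) : S a ^ 3 = -(‖a‖ ^ 2) • S a := by
  rw [EuclideanSpace.real_norm_sq_eq, Fin.sum_univ_three]
  ext i j
  fin_cases i <;> fin_cases j <;>
    · simp [S, pow_succ, Matrix.mul_apply, Fin.sum_univ_three]
      ring

lemma Rot_smul (c : ℝ) (a : V3) :
    Rot (c • a) = 1 + (4 / (4 + (c * ‖a‖) ^ 2) * c) • S a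
      + (4 / (4 + (c * ‖a‖) ^ 2) * (c ^ 2 / 2)) • S a ^ 2 := by
  rw [Rot, S_smul, norm_smul, Real.norm_eq_abs, mul_pow, sq_abs, ← mul_pow, smul_mul_smul_comm,
    pow_two (S a), smul_add, smul_smul, smul_smul, smul_smul, add_assoc]
  congr 3
  ring

lemma Real.four_div_four_add_two_mul_tan_sq {x : ℝ} (hx : Real.cos x ≠ 0) :
    4 / (4 + (2 * Real.tan x) ^ 2) = Real.cos x ^ 2 := by
  rw [← Real.inv_one_add_tan_sq hx]
  field_simp
  ring

/-- For 0 < ‖θ‖ < π and α = (2 tan(‖θ‖/2)/‖θ‖) θ, the matrix exponential of S(θ)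
equals the rescaled-Rodrigues matrix of α. -/
theorem stmt3 (θ : V3) (h0 : 0 < ‖θ‖) (hπ : ‖θ‖ < Real.pi)
    (α : V3) (hα : α = ((2 * Real.tan (‖θ‖ / 2)) / ‖θ‖) • θ) :
    NormedSpace.exp (S θ) = Rot α := by
  set t := ‖θ‖
  have ht : t ≠ 0 := h0.ne'
  have hcos_half : Real.cos (t / 2) ≠ 0 :=
    (Real.cos_pos_of_mem_Ioo ⟨by linarith [Real.pi_pos], by linarith⟩).ne'
  have hct : 2 * Real.tan (t / 2) / t * t = 2 * Real.tan (t / 2) := div_mul_cancel₀ _ ht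
  have hsin_eq : Real.sin t = 2 * Real.sin (t / 2) * Real.cos (t / 2) := by
    rw [← Real.sin_two_mul, mul_div_cancel₀ _ two_ne_zero]
  have hcos_eq : Real.cos t = 1 - 2 * Real.sin (t / 2) ^ 2 := by
    have h := Real.cos_two_mul' (t / 2)
    rw [mul_div_cancel₀ _ two_ne_zero] at h
    linarith [Real.sin_sq_add_cos_sq (t / 2)]
  rw [exp_eq_of_pow_three ht (S_pow_three θ), hα, Rot_smul, hct,
    Real.four_div_four_add_two_mul_tan_sq hcos_half, Real.tan_eq_sin_div_cos]
  congr 3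
  · rw [hsin_eq]
    field_simp
  · rw [hcos_eq]
    field_simp
    ring
end
end

section
/- Let J > 0, h > 0, R₀, R₁ ∈ SO(3), and ω₀, ω₁, M₀, M₁ ∈ ℝ³ satisfy the two discrete Legendre-transform equations S(J ω₀) = (J/(2h))(R₀ᵀ R₁ − R₁ᵀ R₀) − (h/2) S(M₀) and S(J ω₁) = (J/(2h))(R₀ᵀ R₁ − R₁ᵀ R₀) + (h/2) S(M₁). Then the explicit angular-velocity update holds: ω₁ = R₁ᵀ R₀ (ω₀ + (h/(2J)) M₀) + (h/(2J)) M₁. -/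
open Matrix

noncomputable section

/-! The conserved quantity is the discrete momentum `a = J ω₀ + (h/2) M₀`. The first Legendre
equation says `S a = (J/(2h)) (Qᵀ - Q)` with `Q = R₁ᵀ R₀ ∈ SO(3)`; conjugating by `Q` leaves
`Qᵀ - Q` unchanged, and since `Q S(a) Qᵀ = S(Q a)` this forces `Q a = a`. The second equation then
reads `J ω₁ = a + (h/2) M₁`. -/

lemma S_injective : Function.Injective S := by
  intro x y hxy
  have h21 := congrFun (congrFun hxy 2) 1
  have h02 := congrFun (congrFun hxy 0) 2
  have h10 := congrFun (congrFun hxy 1) 0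
  simp only [S, of_apply, cons_val, cons_val_zero, cons_val_one] at h21 h02 h10
  ext i
  fin_cases i <;> assumption

lemma S_add (x y : V3) : S (x + y) = S x + S y := by
  ext i j
  fin_cases i <;> fin_cases j <;> simp [S, add_comm]

lemma S_smul_s8 (r : ℝ) (x : V3) : S (r • x) = r • S x := by
  ext i j
  fin_cases i <;> fin_cases j <;> simp [S]

lemma mulV_smul (A : M3) (r : ℝ) (v : V3) : mulV A (r • v) = r • mulV A v := by
  simp only [mulV, WithLp.ofLp_smul, mulVec_smul, WithLp.toLp_smul]

/-- The cofactor identity `(Q a) × (Q v) = adj(Q)ᵀ (a × v)`, in matrix form. -/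
lemma S_mulV_mul (Q : M3) (a : V3) : S (mulV Q a) * Q = Q.adjugateᵀ * S a := by
  ext i j
  fin_cases i <;> fin_cases j <;>
    simp [S, mulV, mul_apply, mulVec, dotProduct, Fin.sum_univ_three, adjugate_fin_three] <;>
    ring

lemma mul_S_mul_transpose {Q : M3} (hQ : Qᵀ * Q = 1) (hdet : Q.det = 1) (a : V3) :
    Q * S a * Qᵀ = S (mulV Q a) := by
  have hQ' : Q * Qᵀ = 1 := mul_eq_one_comm.mp hQ
  have hadj : Q.adjugate = Qᵀ := by
    rw [← inv_eq_left_inv hQ, inv_def, hdet, Ring.inverse_one, one_smul]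
  rw [← mul_one (S (mulV Q a)), ← hQ', ← mul_assoc, S_mulV_mul, hadj, transpose_transpose]

lemma mulV_eq_self_of_S_eq {Q : M3} (hQ : Qᵀ * Q = 1) (hdet : Q.det = 1) {a : V3} {c : ℝ}
    (ha : S a = c • (Qᵀ - Q)) : mulV Q a = a := by
  have hQ' : Q * Qᵀ = 1 := mul_eq_one_comm.mp hQ
  apply S_injective
  rw [← mul_S_mul_transpose hQ hdet, ha, Matrix.mul_smul, Matrix.smul_mul]
  congr 1
  calc Q * (Qᵀ - Q) * Qᵀ = (Q * Qᵀ) * Qᵀ - Q * (Q * Qᵀ) := by noncomm_ring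
    _ = Qᵀ - Q := by rw [hQ', one_mul, mul_one]

theorem stmt8_general (J h : ℝ) (hJ : 0 < J)
    (R₀ R₁ : M3) (hR₀ : R₀ᵀ * R₀ = 1 ∧ R₀.det = 1) (hR₁ : R₁ᵀ * R₁ = 1 ∧ R₁.det = 1)
    (ω₀ ω₁ M₀ M₁ : V3)
    (h0 : S (J • ω₀) = (J / (2 * h)) • (R₀ᵀ * R₁ - R₁ᵀ * R₀) - (h / 2) • S M₀)
    (h1 : S (J • ω₁) = (J / (2 * h)) • (R₀ᵀ * R₁ - R₁ᵀ * R₀) + (h / 2) • S M₁) :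
    ω₁ = mulV (R₁ᵀ * R₀) (ω₀ + (h / (2 * J)) • M₀) + (h / (2 * J)) • M₁ := by
  obtain ⟨hR₀o, hR₀d⟩ := hR₀
  obtain ⟨hR₁o, hR₁d⟩ := hR₁
  set Q := R₁ᵀ * R₀
  have hQT : Qᵀ = R₀ᵀ * R₁ := by simp [Q]
  have hQo : Qᵀ * Q = 1 := by
    rw [hQT, mul_assoc, ← mul_assoc R₁, mul_eq_one_comm.mp hR₁o, one_mul, hR₀o]
  have hQd : Q.det = 1 := by simp [Q, hR₀d, hR₁d]
  set a := J • ω₀ + (h / 2) • M₀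
  have ha : S a = (J / (2 * h)) • (Qᵀ - Q) := by
    rw [S_add, h0, S_smul_s8, hQT, sub_add_cancel]
  have hfix : mulV Q a = a := mulV_eq_self_of_S_eq hQo hQd ha
  have hmom : J • ω₁ = a + (h / 2) • M₁ :=
    S_injective (by rw [S_add, h1, ha, S_smul_s8, hQT])
  have hdiv : J * (h / (2 * J)) = h / 2 := by field_simp
  have hω₀ : J • (ω₀ + (h / (2 * J)) • M₀) = a := by rw [smul_add, smul_smul, hdiv]
  apply smul_right_injective V3 hJ.ne'
  beta_reduce
  rw [hmom, smul_add, ← mulV_smul, hω₀, hfix, smul_smul, hdiv]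

/-- The explicit angular-velocity update follows from the two discrete
Legendre-transform equations (spherical body: J_d = (J/2)·I). -/
theorem stmt8 (J h : ℝ) (hJ : 0 < J) (hh : 0 < h)
    (R₀ R₁ : M3) (hR₀ : R₀ᵀ * R₀ = 1 ∧ R₀.det = 1) (hR₁ : R₁ᵀ * R₁ = 1 ∧ R₁.det = 1)
    (ω₀ ω₁ M₀ M₁ : V3)
    (h0 : S (J • ω₀) = (J / (2 * h)) • (R₀ᵀ * R₁ - R₁ᵀ * R₀) - (h / 2) • S M₀)
    (h1 : S (J • ω₁) = (J / (2 * h)) • (R₀ᵀ * R₁ - R₁ᵀ * R₀) + (h / 2) • S M₁) :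
    ω₁ = mulV (R₁ᵀ * R₀) (ω₀ + (h / (2 * J)) • M₀) + (h / (2 * J)) • M₁ :=
  stmt8_general J h hJ R₀ R₁ hR₀ hR₁ ω₀ ω₁ M₀ M₁ h0 h1
end
end

section
/- Fix b₀, b₁ ∈ ℝ³. As h → 0, the incremental rescaled-Rodrigues update satisfies the second-order expansion: the function h ↦ (2h/(1 + √(1 − h²‖b₀ + h b₁‖²))) (b₀ + h b₁) − (h b₀ + h² b₁) is O(h³) as h → 0 (in the sense of asymptotic big-O at 0). -/
open Matrix

noncomputable section

open Asymptotics

/-! Write `s = √(1 - h²‖v‖²)`. Rationalising with `1 - s² = (1 - s)(1 + s)` turns the update's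
excess over `h v` into `h³ ‖v‖²/(1 + s)² • v`, and `(1 + s)² ≥ 1` bounds the coefficient by `‖v‖²`. -/

lemma two_div_one_add_sqrt_one_sub_sub_one {t : ℝ} (ht : t ≤ 1) :
    2 / (1 + √(1 - t)) - 1 = t / (1 + √(1 - t)) ^ 2 := by
  have hs : √(1 - t) ^ 2 = 1 - t := Real.sq_sqrt (by linarith)
  have hpos : 0 < 1 + √(1 - t) := by positivity
  field_simp
  linear_combination -hs

variable {E : Type*} [NormedAddCommGroup E] [NormedSpace ℝ E]

lemma eventually_sq_mul_norm_sq_le_one {v : ℝ → E} (hv : v =O[nhds 0] fun _ => (1 : ℝ)) :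
    ∀ᶠ h in nhds (0 : ℝ), h ^ 2 * ‖v h‖ ^ 2 ≤ 1 := by
  have hhv : (fun h : ℝ => h • v h) =O[nhds 0] fun h => h := by
    simpa using (isBigO_refl (fun h : ℝ => h) (nhds 0)).smul hv
  have hlim : Filter.Tendsto (fun h : ℝ => h • v h) (nhds 0) (nhds 0) :=
    hhv.trans_tendsto Filter.tendsto_id
  filter_upwards [hlim.norm.eventually (ge_mem_nhds (by norm_num : ‖(0 : E)‖ < 1))] with h hh
  have : ‖h • v h‖ ^ 2 ≤ 1 := pow_le_one₀ (norm_nonneg _) hh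
  rwa [norm_smul, mul_pow, Real.norm_eq_abs, sq_abs] at this

lemma isBigO_two_mul_div_one_add_sqrt_smul_sub_smul {v : ℝ → E}
    (hv : v =O[nhds 0] fun _ => (1 : ℝ)) :
    (fun h : ℝ => (2 * h / (1 + √(1 - h ^ 2 * ‖v h‖ ^ 2))) • v h - h • v h)
      =O[nhds 0] fun h : ℝ => h ^ 3 := by
  set c : ℝ → ℝ := fun h => ‖v h‖ ^ 2 / (1 + √(1 - h ^ 2 * ‖v h‖ ^ 2)) ^ 2
  -- Only eventually: where `h²‖v‖² > 1` the square root takes its junk value `0`.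
  have heq : (fun h : ℝ => (2 * h / (1 + √(1 - h ^ 2 * ‖v h‖ ^ 2))) • v h - h • v h)
      =ᶠ[nhds 0] fun h => h ^ 3 • (c h • v h) := by
    filter_upwards [eventually_sq_mul_norm_sq_le_one hv] with h hh
    rw [← sub_smul, smul_smul]
    congr 1
    calc 2 * h / (1 + √(1 - h ^ 2 * ‖v h‖ ^ 2)) - h
        = h * (2 / (1 + √(1 - h ^ 2 * ‖v h‖ ^ 2)) - 1) := by ring
      _ = h ^ 3 * c h := by rw [two_div_one_add_sqrt_one_sub_sub_one hh]; ring
  have hc : c =O[nhds 0] fun h => ‖v h‖ ^ 2 := by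
    refine isBigO_of_le _ fun h => ?_
    have hden : 1 ≤ (1 + √(1 - h ^ 2 * ‖v h‖ ^ 2)) ^ 2 :=
      one_le_pow₀ (le_add_of_nonneg_right (Real.sqrt_nonneg _))
    rw [Real.norm_of_nonneg (by positivity), Real.norm_of_nonneg (by positivity)]
    exact div_le_self (by positivity) hden
  have hcv : (fun h => c h • v h) =O[nhds 0] fun _ => (1 : ℝ) := by
    simpa using (hc.trans (hv.norm_left.pow 2)).smul hv
  refine heq.trans_isBigO ?_
  simpa using (isBigO_refl (fun h : ℝ => h ^ 3) (nhds 0)).smul hcv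

/-- Second-order expansion of the incremental rescaled-Rodrigues update:
(2h/(1+√(1−h²‖b₀+h b₁‖²)))(b₀ + h b₁) − (h b₀ + h² b₁) = O(h³) as h → 0. -/
theorem stmt10 (b₀ b₁ : V3) :
    (fun h : ℝ =>
        (2 * h / (1 + Real.sqrt (1 - h ^ 2 * ‖b₀ + h • b₁‖ ^ 2))) • (b₀ + h • b₁)
          - (h • b₀ + h ^ 2 • b₁)) =O[nhds 0] fun h : ℝ => h ^ 3 := by
  have hv : (fun h : ℝ => b₀ + h • b₁) =O[nhds 0] fun _ => (1 : ℝ) :=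
    (by fun_prop : Continuous fun h : ℝ => b₀ + h • b₁).continuousAt.tendsto.isBigO_one ℝ
  refine (isBigO_two_mul_div_one_add_sqrt_smul_sub_smul hv).congr_left fun h => ?_
  simp only [smul_add, smul_smul, sq]
end
end

section
/- Consider the three-dimensional pendulum: let m, g, J > 0, let ρ₀ ∈ ℝ³ and e₃ = (0,0,1), and let R : ℝ → M₃(ℝ) and Ω : ℝ → ℝ³ be differentiable functions satisfying the equations of motion R′(t) = S(Ω(t)) R(t) and J Ω′(t) = m g (R(t) ρ₀) × e₃ for all t. Then the quantity (R(t) ρ₀) · Ω(t) is constant in t. -/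
open Matrix

noncomputable section

attribute [local instance] Matrix.normedAddCommGroup Matrix.normedSpace

/-! The derivative of `u := R ρ₀` is `Ω × u`, which is orthogonal to `Ω`, and the derivative
of `Ω` is a multiple of `u × e₃`, which is orthogonal to `u`; so `(u · Ω)′ = 0`. -/

theorem real_inner_eq_dotProduct (u v : V3) : inner ℝ u v = u ⬝ᵥ v := by
  rw [EuclideanSpace.inner_eq_star_dotProduct, star_trivial, dotProduct_comm]

theorem dotProduct_eq_of_hasDerivAt_cross {u w w' : ℝ → V3}
    (hu : ∀ t, HasDerivAt u (WithLp.toLp 2 (w t ⨯₃ u t)) t)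
    (hw : ∀ t, HasDerivAt w (w' t) t) (horth : ∀ t, u t ⬝ᵥ w' t = 0) (t₁ t₂ : ℝ) :
    u t₁ ⬝ᵥ w t₁ = u t₂ ⬝ᵥ w t₂ := by
  have hderiv : ∀ t, HasDerivAt (fun t => inner ℝ (u t) (w t)) 0 t := by
    intro t
    refine ((hu t).inner ℝ (hw t)).congr_deriv ?_
    rw [real_inner_eq_dotProduct, real_inner_eq_dotProduct, horth, WithLp.ofLp_toLp,
      dotProduct_comm, dot_self_cross, add_zero]
  simpa only [real_inner_eq_dotProduct] using
    is_const_of_deriv_eq_zero (fun t => (hderiv t).differentiableAt) (fun t => (hderiv t).deriv)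
      t₁ t₂

theorem mulV_S (a v : V3) : mulV (S a) v = WithLp.toLp 2 (a ⨯₃ v) := by
  ext i
  fin_cases i <;>
    simp [S, mulV, crossProduct, dotProduct, Fin.sum_univ_three] <;> ring

theorem mulV_mul (A B : M3) (v : V3) : mulV (A * B) v = mulV A (mulV B v) := by
  simp [mulV, mulVec_mulVec]

theorem hasDerivAt_mulV {R : ℝ → M3} {R' : M3} {t : ℝ} (hR : HasDerivAt R R' t) (v : V3) :
    HasDerivAt (fun s => mulV (R s) v) (mulV R' v) t := by
  let L : M3 →ₗ[ℝ] V3 :=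
    { toFun := fun A => mulV A v
      map_add' := fun A B => by simp only [mulV, add_mulVec, WithLp.toLp_add]
      map_smul' := fun c A => by simp only [mulV, smul_mulVec, WithLp.toLp_smul, RingHom.id_apply] }
  exact (LinearMap.toContinuousLinearMap L).hasFDerivAt.comp_hasDerivAt t hR

theorem dotProduct_eq_zero_of_smul_eq_smul_cross {K : Type*} [CommRing K] [NoZeroDivisors K]
    {J c : K} (hJ : J ≠ 0) {u v e : Fin 3 → K}
    (h : J • v = c • u ⨯₃ e) : u ⬝ᵥ v = 0 := by
  have : J * (u ⬝ᵥ v) = 0 := by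
    rw [← smul_eq_mul, ← dotProduct_smul, h, dotProduct_smul, dot_self_cross, smul_zero]
  exact (mul_eq_zero.mp this).resolve_left hJ

theorem stmt15_general (m g J : ℝ) (hJ : 0 < J)
    (ρ₀ : V3) (e₃ : V3)
    (R : ℝ → M3) (Ω : ℝ → V3) (hR : Differentiable ℝ R) (hΩ : Differentiable ℝ Ω)
    (heq1 : ∀ t, deriv R t = S (Ω t) * R t)
    (heq2 : ∀ t, J • deriv Ω t = (m * g) • crossProduct (mulV (R t) ρ₀) e₃) :
    ∀ t₁ t₂ : ℝ, mulV (R t₁) ρ₀ ⬝ᵥ Ω t₁ = mulV (R t₂) ρ₀ ⬝ᵥ Ω t₂ := by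
  refine dotProduct_eq_of_hasDerivAt_cross (fun t => ?_) (fun t => (hΩ t).hasDerivAt)
    (fun t => dotProduct_eq_zero_of_smul_eq_smul_cross hJ.ne' (heq2 t))
  have hRt : HasDerivAt R (S (Ω t) * R t) t := heq1 t ▸ (hR t).hasDerivAt
  simpa only [mulV_mul, mulV_S] using hasDerivAt_mulV hRt ρ₀

/-- For the three-dimensional pendulum, (R(t) ρ₀) · Ω(t) is a constant of the
motion along solutions of R′ = S(Ω) R, J Ω′ = m g (R ρ₀) × e₃. -/
theorem stmt15 (m g J : ℝ) (hm : 0 < m) (hg : 0 < g) (hJ : 0 < J)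
    (ρ₀ : V3) (e₃ : V3) (he₃ : e₃ = WithLp.toLp 2 ![0, 0, 1])
    (R : ℝ → M3) (Ω : ℝ → V3) (hR : Differentiable ℝ R) (hΩ : Differentiable ℝ Ω)
    (heq1 : ∀ t, deriv R t = S (Ω t) * R t)
    (heq2 : ∀ t, J • deriv Ω t = (m * g) • crossProduct (mulV (R t) ρ₀) e₃) :
    ∀ t₁ t₂ : ℝ, mulV (R t₁) ρ₀ ⬝ᵥ Ω t₁ = mulV (R t₂) ρ₀ ⬝ᵥ Ω t₂ :=
  stmt15_general m g J hJ ρ₀ e₃ R Ω hR hΩ heq1 heq2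
end
end
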